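/- (Ordering of singular tubes, part 1.) Let M₃,…,M_p be invertible with each M_k = c_k W_k, c_k ≠ 0 and W_k orthogonal, and let A = U ⋆M S ⋆M Vᵀ be a t-SVDM of A ∈ ℝ^{n₁×n₂×⋯×n_p} with t-rank r. Then ‖A‖_F² = ‖S‖_F² = Σ_{i=1}^{r} ‖s_i‖_F², where s_i = S(i,i,:,…,:) is the (i,i)-singular tube of S. -/

import Mathlib

open Matrix

/-!
Order-`p` real tensors (`p = q + 2`) are represented as families of frontal
slices: a tensor `A ∈ ℝ^{n₁ × n₂ × n₃ × ⋯ × n_p}` is a function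
`A : TI m → Matrix (Fin n₁) (Fin n₂) ℝ`, where `TI m = ∀ k : Fin q, Fin (m k)`
is the trailing multi-index `(i₃, …, i_p)` and `A i` is the frontal slice
`A(:,:,i₃,…,i_p)`.
-/

namespace TSVDM

variable {q : ℕ} {m : Fin q → ℕ}

/-- Trailing multi-index `(i₃, …, i_p)`. -/
abbrev TI (m : Fin q → ℕ) : Type := ∀ k, Fin (m k)

/-- Transform-domain tensor `Â = A ×₃ M₃ ×₄ M₄ ⋯ ×_p M_p`
(mode-`k` products along all trailing modes). -/
noncomputable def hat (M : ∀ k, Matrix (Fin (m k)) (Fin (m k)) ℝ) {a b : Type}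
    (A : TI m → Matrix a b ℝ) : TI m → Matrix a b ℝ :=
  fun i => ∑ j : TI m, (∏ k, M k (i k) (j k)) • A j

/-- Inverse transform `×₃ M₃⁻¹ ×₄ M₄⁻¹ ⋯ ×_p M_p⁻¹`. -/
noncomputable def unhat (M : ∀ k, Matrix (Fin (m k)) (Fin (m k)) ℝ) {a b : Type}
    (A : TI m → Matrix a b ℝ) : TI m → Matrix a b ℝ :=
  fun i => ∑ j : TI m, (∏ k, (M k)⁻¹ (i k) (j k)) • A j

/-- The `⋆M`-product: `A ⋆M B = (Â △ B̂) ×₃ M₃⁻¹ ⋯ ×_p M_p⁻¹`, where `△` is the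
facewise product (slice-wise matrix multiplication). -/
noncomputable def starM (M : ∀ k, Matrix (Fin (m k)) (Fin (m k)) ℝ)
    {a b c : Type} [Fintype b]
    (A : TI m → Matrix a b ℝ) (B : TI m → Matrix b c ℝ) : TI m → Matrix a c ℝ :=
  unhat M (fun i => hat M A i * hat M B i)

/-- The `⋆M`-transpose: transpose every transform-domain frontal slice. -/
noncomputable def transM (M : ∀ k, Matrix (Fin (m k)) (Fin (m k)) ℝ) {a b : Type}
    (A : TI m → Matrix a b ℝ) : TI m → Matrix b a ℝ :=
  unhat M (fun i => (hat M A i)ᵀ)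

/-- The `⋆M`-identity: all transform-domain frontal slices equal the identity matrix. -/
noncomputable def idM (M : ∀ k, Matrix (Fin (m k)) (Fin (m k)) ℝ)
    (a : Type) [DecidableEq a] : TI m → Matrix a a ℝ :=
  unhat M (fun _ => (1 : Matrix a a ℝ))

/-- `Q` is `⋆M`-orthogonal if `Qᵀ ⋆M Q = Q ⋆M Qᵀ = I`. -/
def IsStarMOrthogonal (M : ∀ k, Matrix (Fin (m k)) (Fin (m k)) ℝ)
    {a : Type} [Fintype a] [DecidableEq a] (Q : TI m → Matrix a a ℝ) : Prop :=
  starM M (transM M Q) Q = idM M a ∧ starM M Q (transM M Q) = idM M a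

/-- Frobenius norm of a tensor. -/
noncomputable def frob {a b : Type} [Fintype a] [Fintype b]
    (A : TI m → Matrix a b ℝ) : ℝ :=
  Real.sqrt (∑ i : TI m, ∑ r : a, ∑ c : b, A i r c ^ 2)

/-- Diagonal position `(j, j)`: row index. -/
def dIdx₁ {n₁ n₂ : ℕ} (j : Fin (min n₁ n₂)) : Fin n₁ :=
  ⟨j.1, lt_of_lt_of_le j.2 (Nat.min_le_left n₁ n₂)⟩

/-- Diagonal position `(j, j)`: column index. -/
def dIdx₂ {n₁ n₂ : ℕ} (j : Fin (min n₁ n₂)) : Fin n₂ :=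
  ⟨j.1, lt_of_lt_of_le j.2 (Nat.min_le_right n₁ n₂)⟩

/-- `A = U ⋆M S ⋆M Vᵀ` is a t-SVDM of `A`: `U`, `V` are `⋆M`-orthogonal, `S` is
f-diagonal (each transform-domain frontal slice is diagonal), and the diagonal
entries of each frontal slice of `Ŝ` are nonnegative and in descending order. -/
structure IsTSVDM (M : ∀ k, Matrix (Fin (m k)) (Fin (m k)) ℝ) {n₁ n₂ : ℕ}
    (A : TI m → Matrix (Fin n₁) (Fin n₂) ℝ)
    (U : TI m → Matrix (Fin n₁) (Fin n₁) ℝ)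
    (S : TI m → Matrix (Fin n₁) (Fin n₂) ℝ)
    (V : TI m → Matrix (Fin n₂) (Fin n₂) ℝ) : Prop where
  decomp : A = starM M (starM M U S) (transM M V)
  orthU : IsStarMOrthogonal M U
  orthV : IsStarMOrthogonal M V
  fdiag : ∀ (i : TI m) (a : Fin n₁) (b : Fin n₂), (a : ℕ) ≠ (b : ℕ) → hat M S i a b = 0
  nonneg : ∀ (i : TI m) (j : Fin (min n₁ n₂)), 0 ≤ hat M S i (dIdx₁ j) (dIdx₂ j)
  descend : ∀ (i : TI m) (j j' : Fin (min n₁ n₂)), j ≤ j' →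
    hat M S i (dIdx₁ j') (dIdx₂ j') ≤ hat M S i (dIdx₁ j) (dIdx₂ j)

/-- The `(j,j)`-singular tube of `S`, as a function of the trailing multi-index. -/
def tube {n₁ n₂ : ℕ} (S : TI m → Matrix (Fin n₁) (Fin n₂) ℝ)
    (j : Fin (min n₁ n₂)) : TI m → ℝ :=
  fun i => S i (dIdx₁ j) (dIdx₂ j)

/-- Frobenius norm of the `(j,j)`-singular tube of `S`. -/
noncomputable def tubeNorm {n₁ n₂ : ℕ} (S : TI m → Matrix (Fin n₁) (Fin n₂) ℝ)
    (j : Fin (min n₁ n₂)) : ℝ :=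
  Real.sqrt (∑ i : TI m, tube S j i ^ 2)

/-- `r` is the t-rank: the number of nonzero singular tubes (tubes `s₁,…,s_r`
are nonzero and the remaining ones vanish). -/
def HasTRank {n₁ n₂ : ℕ} (S : TI m → Matrix (Fin n₁) (Fin n₂) ℝ) (r : ℕ) : Prop :=
  ∀ j : Fin (min n₁ n₂), ((j : ℕ) < r ↔ tube S j ≠ 0)

/-- Keep only the first `k` lateral slices (columns of each frontal slice). -/
def truncCols {n k : ℕ} (hk : k ≤ n) {a : Type}
    (U : TI m → Matrix a (Fin n) ℝ) : TI m → Matrix a (Fin k) ℝ :=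
  fun i => Matrix.of fun r c => U i r (Fin.castLE hk c)

/-- Keep only the leading `k × k` block of each frontal slice. -/
def truncBlock {n₁ n₂ k : ℕ} (h₁ : k ≤ n₁) (h₂ : k ≤ n₂)
    (S : TI m → Matrix (Fin n₁) (Fin n₂) ℝ) : TI m → Matrix (Fin k) (Fin k) ℝ :=
  fun i => Matrix.of fun a b => S i (Fin.castLE h₁ a) (Fin.castLE h₂ b)

/-- The t-rank-`k` truncation `A_k = U_k ⋆M S_k ⋆M V_kᵀ`. -/
noncomputable def truncApprox (M : ∀ k, Matrix (Fin (m k)) (Fin (m k)) ℝ)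
    {n₁ n₂ : ℕ} (U : TI m → Matrix (Fin n₁) (Fin n₁) ℝ)
    (S : TI m → Matrix (Fin n₁) (Fin n₂) ℝ)
    (V : TI m → Matrix (Fin n₂) (Fin n₂) ℝ) (k : ℕ) (hk : k ≤ min n₁ n₂) :
    TI m → Matrix (Fin n₁) (Fin n₂) ℝ :=
  starM M
    (starM M (truncCols (le_trans hk (Nat.min_le_left _ _)) U)
      (truncBlock (le_trans hk (Nat.min_le_left _ _)) (le_trans hk (Nat.min_le_right _ _)) S))
    (transM M (truncCols (le_trans hk (Nat.min_le_right _ _)) V))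

/-- The `j`-th lateral slice `A(:,j,:,…,:)`, as an `n₁ × 1 × n₃ × ⋯ × n_p` tensor. -/
def lateral {n₁ n₂ : ℕ} (A : TI m → Matrix (Fin n₁) (Fin n₂) ℝ) (j : Fin n₂) :
    TI m → Matrix (Fin n₁) (Fin 1) ℝ :=
  fun i => Matrix.of fun r _ => A i r j

/-- The `(j,j)`-singular tube of `S` regarded as a `1 × 1 × n₃ × ⋯ × n_p` tensor. -/
def tubeT {n₁ n₂ : ℕ} (S : TI m → Matrix (Fin n₁) (Fin n₂) ℝ)
    (j : Fin (min n₁ n₂)) : TI m → Matrix (Fin 1) (Fin 1) ℝ :=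
  fun i => Matrix.of fun _ _ => S i (dIdx₁ j) (dIdx₂ j)

/-!
For `M_k = c_k W_k` the transform `A ↦ Â` multiplies every tube by the Kronecker product
`K = ⊗ₖ M_k`, and `Kᵀ K = (∏ₖ c_k²) I`; hence `‖Â‖_F² = (∏ₖ c_k²) ‖A‖_F²`. In the transform
domain the t-SVDM is a family of ordinary factorizations `Â_i = Û_i Ŝ_i V̂_iᵀ` with orthogonal
`Û_i`, `V̂_i`, which preserve the Frobenius norm slice by slice, so `‖A‖_F = ‖S‖_F`. As the
transform is invertible, `S` is f-diagonal together with `Ŝ`, so `‖S‖_F²` is the sum of the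
squared norms of the diagonal tubes, and only the first `r` of them are nonzero.
-/

/-- The Kronecker product `M₃ ⊗ ⋯ ⊗ M_p`: `hat M` multiplies every tube by this matrix. -/
def kron {R : Type*} [CommSemiring R] (M : ∀ k, Matrix (Fin (m k)) (Fin (m k)) R) :
    Matrix (TI m) (TI m) R :=
  Matrix.of fun i j => ∏ k, M k (i k) (j k)

section Kron

variable {R : Type*} [CommSemiring R]

lemma kron_mul (P Q : ∀ k, Matrix (Fin (m k)) (Fin (m k)) R) :
    kron P * kron Q = kron (P * Q) := by
  ext i j
  simp only [kron, mul_apply, of_apply, Pi.mul_apply]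
  rw [Finset.prod_univ_sum, Fintype.piFinset_univ]
  exact Finset.sum_congr rfl fun l _ => Finset.prod_mul_distrib.symm

lemma kron_one : kron (1 : ∀ k, Matrix (Fin (m k)) (Fin (m k)) R) = 1 := by
  ext i j
  simp [kron, one_apply, Fintype.prod_boole, funext_iff]

lemma kron_transpose (M : ∀ k, Matrix (Fin (m k)) (Fin (m k)) R) :
    (kron M)ᵀ = kron fun k => (M k)ᵀ :=
  rfl

lemma kron_smul_one (d : Fin q → R) :
    kron (fun k => d k • (1 : Matrix (Fin (m k)) (Fin (m k)) R)) = (∏ k, d k) • 1 := by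
  ext i j
  simp only [kron, of_apply, Matrix.smul_apply, smul_eq_mul, Finset.prod_mul_distrib]
  exact congrArg _ (congrFun (congrFun kron_one i) j)

end Kron

section Orthogonal

variable {R : Type*} [CommRing R] {n p : Type*} [Fintype n] [Fintype p]

lemma sum_sq_mulVec_of_transpose_mul_self_eq_smul [DecidableEq n] {K : Matrix p n R} {c : R}
    (hK : Kᵀ * K = c • 1) (f : n → R) :
    ∑ i, (K *ᵥ f) i ^ 2 = c * ∑ j, f j ^ 2 := by
  calc ∑ i, (K *ᵥ f) i ^ 2 = (f ᵥ* (Kᵀ * K)) ⬝ᵥ f := by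
        rw [← vecMul_vecMul, vecMul_transpose, ← dotProduct_mulVec]
        simp only [dotProduct, sq]
    _ = c * ∑ j, f j ^ 2 := by
        rw [hK, vecMul_smul, vecMul_one, smul_dotProduct, smul_eq_mul]
        simp only [dotProduct, sq]

lemma sum_sq_transpose (X : Matrix n p R) :
    ∑ s, ∑ r, Xᵀ s r ^ 2 = ∑ r, ∑ s, X r s ^ 2 :=
  Finset.sum_comm

lemma sum_sq_mul_of_transpose_mul_self_eq_one [DecidableEq n] {K : Matrix n n R}
    (hK : Kᵀ * K = 1) (X : Matrix n p R) :
    ∑ r, ∑ s, (K * X) r s ^ 2 = ∑ r, ∑ s, X r s ^ 2 := by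
  rw [← sum_sq_transpose, ← sum_sq_transpose X]
  refine Finset.sum_congr rfl fun s _ => ?_
  rw [← one_mul (∑ r, Xᵀ s r ^ 2)]
  exact sum_sq_mulVec_of_transpose_mul_self_eq_smul (by rw [hK, one_smul]) fun r => X r s

lemma sum_sq_mul_mul_transpose [DecidableEq n] [DecidableEq p] {P : Matrix n n R}
    {Q : Matrix p p R} (hP : Pᵀ * P = 1) (hQ : Qᵀ * Q = 1) (X : Matrix n p R) :
    ∑ r, ∑ s, (P * X * Qᵀ) r s ^ 2 = ∑ r, ∑ s, X r s ^ 2 := by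
  calc ∑ r, ∑ s, (P * X * Qᵀ) r s ^ 2 = ∑ r, ∑ s, (Q * (P * X)ᵀ)ᵀ r s ^ 2 := by
        rw [transpose_mul, transpose_transpose]
    _ = ∑ r, ∑ s, (P * X) r s ^ 2 := by
        rw [sum_sq_transpose, sum_sq_mul_of_transpose_mul_self_eq_one hQ, sum_sq_transpose]
    _ = ∑ r, ∑ s, X r s ^ 2 := sum_sq_mul_of_transpose_mul_self_eq_one hP X

end Orthogonal

section Transform

variable {a b : Type}

lemma hat_apply (M : ∀ k, Matrix (Fin (m k)) (Fin (m k)) ℝ) (A : TI m → Matrix a b ℝ)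
    (i : TI m) : hat M A i = ∑ j, kron M i j • A j :=
  rfl

lemma unhat_eq_hat_inv (M : ∀ k, Matrix (Fin (m k)) (Fin (m k)) ℝ)
    (A : TI m → Matrix a b ℝ) : unhat M A = hat M⁻¹ A :=
  rfl

lemma hat_hat (P Q : ∀ k, Matrix (Fin (m k)) (Fin (m k)) ℝ) (A : TI m → Matrix a b ℝ) :
    hat P (hat Q A) = hat (P * Q) A := by
  funext i
  simp only [hat_apply, ← kron_mul, mul_apply, Finset.smul_sum, Finset.sum_smul, smul_smul]
  exact Finset.sum_comm

lemma hat_one (A : TI m → Matrix a b ℝ) : hat 1 A = A := by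
  funext i
  simp [hat_apply, kron_one, one_apply]

variable {M : ∀ k, Matrix (Fin (m k)) (Fin (m k)) ℝ}

lemma hat_unhat (hM : ∀ k, IsUnit (M k).det) (A : TI m → Matrix a b ℝ) :
    hat M (unhat M A) = A := by
  rw [unhat_eq_hat_inv, hat_hat, show M * M⁻¹ = 1 from funext fun k => mul_nonsing_inv _ (hM k),
    hat_one]

lemma unhat_hat (hM : ∀ k, IsUnit (M k).det) (A : TI m → Matrix a b ℝ) :
    unhat M (hat M A) = A := by
  rw [unhat_eq_hat_inv, hat_hat, show M⁻¹ * M = 1 from funext fun k => nonsing_inv_mul _ (hM k),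
    hat_one]

lemma hat_starM (hM : ∀ k, IsUnit (M k).det) {c : Type} [Fintype b]
    (A : TI m → Matrix a b ℝ) (B : TI m → Matrix b c ℝ) (i : TI m) :
    hat M (starM M A B) i = hat M A i * hat M B i := by
  rw [starM, hat_unhat hM]

lemma hat_transM (hM : ∀ k, IsUnit (M k).det) (A : TI m → Matrix a b ℝ) (i : TI m) :
    hat M (transM M A) i = (hat M A i)ᵀ := by
  rw [transM, hat_unhat hM]

lemma hat_idM (hM : ∀ k, IsUnit (M k).det) [DecidableEq a] (i : TI m) :
    hat M (idM M a) i = 1 := by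
  rw [idM, hat_unhat hM]

lemma sum_sq_hat_apply {d : Fin q → ℝ} (hM : ∀ k, (M k)ᵀ * M k = d k • 1)
    (A : TI m → Matrix a b ℝ) (r : a) (s : b) :
    ∑ i, hat M A i r s ^ 2 = (∏ k, d k) * ∑ i, A i r s ^ 2 := by
  have hK : (kron M)ᵀ * kron M = (∏ k, d k) • 1 := by
    rw [kron_transpose, kron_mul, ← kron_smul_one]
    exact congrArg kron (funext hM)
  have hA : ∀ i, hat M A i r s = (kron M *ᵥ fun j => A j r s) i := fun i => by
    simp [hat_apply, mulVec, dotProduct, Matrix.sum_apply]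
  simp only [hA]
  exact sum_sq_mulVec_of_transpose_mul_self_eq_smul hK _

end Transform

section Norms

variable {a b : Type} [Fintype a] [Fintype b]

lemma frob_sq (A : TI m → Matrix a b ℝ) : frob A ^ 2 = ∑ i, ∑ r, ∑ s, A i r s ^ 2 :=
  Real.sq_sqrt (by positivity)

lemma frob_sq_eq_sum_sum_tube (A : TI m → Matrix a b ℝ) :
    frob A ^ 2 = ∑ r, ∑ s, ∑ i, A i r s ^ 2 := by
  rw [frob_sq, Finset.sum_comm]
  exact Finset.sum_congr rfl fun _ _ => Finset.sum_comm

lemma frob_hat_sq {M : ∀ k, Matrix (Fin (m k)) (Fin (m k)) ℝ} {d : Fin q → ℝ}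
    (hM : ∀ k, (M k)ᵀ * M k = d k • 1) (A : TI m → Matrix a b ℝ) :
    frob (hat M A) ^ 2 = (∏ k, d k) * frob A ^ 2 := by
  simp only [frob_sq_eq_sum_sum_tube, sum_sq_hat_apply hM, Finset.mul_sum]

lemma tubeNorm_sq {n₁ n₂ : ℕ} (S : TI m → Matrix (Fin n₁) (Fin n₂) ℝ) (j : Fin (min n₁ n₂)) :
    tubeNorm S j ^ 2 = ∑ i, S i (dIdx₁ j) (dIdx₂ j) ^ 2 :=
  Real.sq_sqrt (by positivity)

end Norms

lemma sum_sum_eq_sum_diag {R : Type*} [AddCommMonoid R] {n₁ n₂ : ℕ}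
    (X : Fin n₁ → Fin n₂ → R) (hX : ∀ (a : Fin n₁) (b : Fin n₂), (a : ℕ) ≠ b → X a b = 0) :
    ∑ a, ∑ b, X a b = ∑ j : Fin (min n₁ n₂), X (dIdx₁ j) (dIdx₂ j) := by
  rw [← Fintype.sum_prod_type']
  refine (Fintype.sum_of_injective (fun j => (dIdx₁ j, dIdx₂ j)) ?_ _ _ ?_ fun _ => rfl).symm
  · exact fun j j' h => Fin.ext (congrArg (fun x => (x.1 : ℕ)) h)
  · rintro ⟨a, b⟩ hab
    refine hX a b fun h => hab ⟨⟨a, lt_min a.2 (h ▸ b.2)⟩, ?_⟩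
    exact Prod.ext rfl (Fin.ext h)

lemma HasTRank.tubeNorm_eq_zero {n₁ n₂ r : ℕ} {S : TI m → Matrix (Fin n₁) (Fin n₂) ℝ}
    (hr : HasTRank S r) {j : Fin (min n₁ n₂)} (hj : ¬ (j : ℕ) < r) : tubeNorm S j = 0 := by
  have hS : tube S j = 0 := not_not.mp (mt (hr j).mpr hj)
  simp [tubeNorm, hS]

section Decomposition

variable {M : ∀ k, Matrix (Fin (m k)) (Fin (m k)) ℝ}

lemma IsStarMOrthogonal.transpose_hat_mul_hat (hM : ∀ k, IsUnit (M k).det) {a : Type}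
    [Fintype a] [DecidableEq a] {Q : TI m → Matrix a a ℝ} (hQ : IsStarMOrthogonal M Q)
    (i : TI m) :
    (hat M Q i)ᵀ * hat M Q i = 1 := by
  simpa only [hat_starM hM, hat_transM hM, hat_idM hM] using congrFun (congrArg (hat M) hQ.1) i

variable {n₁ n₂ : ℕ} {A : TI m → Matrix (Fin n₁) (Fin n₂) ℝ}
  {U : TI m → Matrix (Fin n₁) (Fin n₁) ℝ} {S : TI m → Matrix (Fin n₁) (Fin n₂) ℝ}
  {V : TI m → Matrix (Fin n₂) (Fin n₂) ℝ}

lemma IsTSVDM.hat_eq (hM : ∀ k, IsUnit (M k).det) (hSVD : IsTSVDM M A U S V) (i : TI m) :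
    hat M A i = hat M U i * hat M S i * (hat M V i)ᵀ := by
  rw [hSVD.decomp, hat_starM hM, hat_starM hM, hat_transM hM]

lemma IsTSVDM.apply_eq_zero_of_ne (hM : ∀ k, IsUnit (M k).det) (hSVD : IsTSVDM M A U S V)
    (i : TI m) {a : Fin n₁} {b : Fin n₂} (hab : (a : ℕ) ≠ b) : S i a b = 0 := by
  rw [← unhat_hat hM S]
  simp [unhat, Matrix.sum_apply, hSVD.fdiag _ a b hab]

end Decomposition

/-- (Ordering of singular tubes, part 1.)
`‖A‖_F² = ‖S‖_F² = Σ_{i=1}^{r} ‖s_i‖_F²` for a t-SVDM of `A` with t-rank `r`. -/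
theorem frob_sq_eq_sum_tubeNorm_sq {q : ℕ} {m : Fin q → ℕ}
    (M : ∀ k, Matrix (Fin (m k)) (Fin (m k)) ℝ)
    (c : Fin q → ℝ) (W : ∀ k, Matrix (Fin (m k)) (Fin (m k)) ℝ)
    (hc : ∀ k, c k ≠ 0)
    (hW : ∀ k, W k * (W k)ᵀ = 1 ∧ (W k)ᵀ * W k = 1)
    (hM : ∀ k, M k = c k • W k)
    {n₁ n₂ : ℕ} (A : TI m → Matrix (Fin n₁) (Fin n₂) ℝ)
    (U : TI m → Matrix (Fin n₁) (Fin n₁) ℝ)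
    (S : TI m → Matrix (Fin n₁) (Fin n₂) ℝ)
    (V : TI m → Matrix (Fin n₂) (Fin n₂) ℝ)
    (hSVD : IsTSVDM M A U S V) (r : ℕ) (hr : HasTRank S r) :
    frob A ^ 2 = frob S ^ 2 ∧
    frob S ^ 2 =
      ∑ j ∈ Finset.univ.filter (fun j : Fin (min n₁ n₂) => (j : ℕ) < r),
        tubeNorm S j ^ 2 := by
  have hMunit : ∀ k, IsUnit (M k).det := fun k =>
    isUnit_det_of_right_inverse (B := (c k)⁻¹ • (W k)ᵀ) <| by
      rw [hM k, smul_mul_smul_comm, (hW k).1, mul_inv_cancel₀ (hc k), one_smul]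
  have hMorth : ∀ k, (M k)ᵀ * M k = c k ^ 2 • 1 := fun k => by
    rw [hM k, transpose_smul, smul_mul_smul_comm, (hW k).2, sq]
  refine ⟨?_, ?_⟩
  · have hC : ∏ k, c k ^ 2 ≠ 0 := Finset.prod_ne_zero_iff.mpr fun k _ => pow_ne_zero 2 (hc k)
    refine mul_left_cancel₀ hC ?_
    rw [← frob_hat_sq hMorth, ← frob_hat_sq hMorth, frob_sq, frob_sq]
    refine Finset.sum_congr rfl fun i _ => ?_
    rw [hSVD.hat_eq hMunit i]
    exact sum_sq_mul_mul_transpose (hSVD.orthU.transpose_hat_mul_hat hMunit i)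
      (hSVD.orthV.transpose_hat_mul_hat hMunit i) _
  · rw [frob_sq_eq_sum_sum_tube, sum_sum_eq_sum_diag _ fun a b hab => by
      simp [hSVD.apply_eq_zero_of_ne hMunit _ hab]]
    simp only [← tubeNorm_sq]
    refine (Finset.sum_filter_of_ne fun j _ hj => ?_).symm
    by_contra hjr
    simp [hr.tubeNorm_eq_zero hjr] at hj

end TSVDM
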